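/- arXiv:1512.01995 — 3 statements merged into one kernel-verified Lean document; each statement's English description precedes it below -/
import Mathlib

section
/- Let M₀ be a von Neumann algebra acting on a complex Hilbert space H, let P be a von Neumann subalgebra of M₀, and set N := P' ∩ M₀. Then N equals the set of all a ∈ M₀ such that ρ(a) = a for every unital *-endomorphism ρ of M₀ satisfying ρ(n) = n for all n ∈ N. (Key duality step in Proposition 'the quadruple (N, N^c, C_N, C_{N^c}) is determined by any one of its elements': relative commutants are exactly the fixed-point sets of their fixing endomorphisms.) -/
/-!
Conjugation by a unitary `u` of `P` is a unital *-endomorphism of `M₀` that fixes `P' ∩ M₀`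
pointwise, so an element fixed by every such endomorphism commutes with every unitary of `P`.
Being a C⋆-algebra, `P` is the linear span of its unitaries, hence that element lies in `P'`.
-/

variable {H : Type*} [NormedAddCommGroup H] [InnerProductSpace ℂ H] [CompleteSpace H]

/-- A unital *-endomorphism of the von Neumann algebra `M₀`, encoded as a map on bounded
operators on `H` which maps `M₀` into itself and is ℂ-linear, multiplicative, unital and
star-preserving on `M₀`. -/
structure IsVNEndo (M₀ : VonNeumannAlgebra H) (ρ : (H →L[ℂ] H) → (H →L[ℂ] H)) : Prop where
  maps_to : ∀ a ∈ M₀, ρ a ∈ M₀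
  map_add : ∀ a ∈ M₀, ∀ b ∈ M₀, ρ (a + b) = ρ a + ρ b
  map_smul : ∀ (c : ℂ), ∀ a ∈ M₀, ρ (c • a) = c • ρ a
  map_mul : ∀ a ∈ M₀, ∀ b ∈ M₀, ρ (a * b) = ρ a * ρ b
  map_star : ∀ a ∈ M₀, ρ (star a) = star (ρ a)
  map_one : ρ 1 = 1

/-- The relative commutant `S' ∩ M₀` of a set `S` of operators inside a von Neumann
algebra `M₀`. -/
def relComm (M₀ : VonNeumannAlgebra H) (S : Set (H →L[ℂ] H)) : Set (H →L[ℂ] H) :=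
  S.centralizer ∩ (M₀ : Set (H →L[ℂ] H))

instance VonNeumannAlgebra.isClosed (M : VonNeumannAlgebra H) :
    IsClosed (M.toStarSubalgebra : Set (H →L[ℂ] H)) := by
  rw [VonNeumannAlgebra.coe_toStarSubalgebra, ← M.centralizer_centralizer]
  exact Set.isClosed_centralizer _

theorem StarSubalgebra.mem_centralizer_of_forall_unitary_commute {A : Type*} [CStarAlgebra A]
    (S : StarSubalgebra ℂ A) [IsClosed (S : Set A)] {a : A}
    (h : ∀ u ∈ unitary A, u ∈ S → Commute u a) : a ∈ Set.centralizer (S : Set A) := by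
  suffices hspan : ∀ x ∈ Submodule.span ℂ (unitary S : Set S), Commute (x : A) a from
    fun p hp => hspan ⟨p, hp⟩ (CStarAlgebra.span_unitary S ▸ Submodule.mem_top)
  intro x hx
  induction hx using Submodule.span_induction with
  | mem u hu => exact h u (Unitary.map_mem S.subtype hu) u.2
  | zero => exact Commute.zero_left a
  | add x y _ _ hx hy => exact hx.add_left hy
  | smul c x _ hx => exact hx.smul_left c

theorem isVNEndo_conj_unitary (M₀ : VonNeumannAlgebra H) {u : H →L[ℂ] H}
    (hu : u ∈ unitary (H →L[ℂ] H)) (huM : u ∈ M₀) : IsVNEndo M₀ (fun x => u * x * star u) where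
  maps_to a ha := mul_mem (mul_mem huM ha) (star_mem huM)
  map_add a _ b _ := by simp only [mul_add, add_mul]
  map_smul c a _ := by simp only [mul_smul_comm, smul_mul_assoc]
  map_mul a _ b _ := by
    simp only [mul_assoc, Unitary.star_mul_self_of_mem hu, ← mul_assoc (star u) u, one_mul]
  map_star a _ := by simp only [star_mul, star_star, mul_assoc]
  map_one := by simp only [mul_one, Unitary.mul_star_self_of_mem hu]

/-- For a von Neumann subalgebra `P ⊆ M₀`, the relative commutant
`N := P' ∩ M₀` equals the set of all `a ∈ M₀` fixed by every unital *-endomorphism of `M₀`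
that fixes `N` pointwise. -/
theorem relComm_eq_fixedPoints_of_fixing_endos
    (M₀ P : VonNeumannAlgebra H) (hP : (P : Set (H →L[ℂ] H)) ⊆ (M₀ : Set (H →L[ℂ] H))) :
    relComm M₀ (P : Set (H →L[ℂ] H)) =
      {a : H →L[ℂ] H | a ∈ M₀ ∧
        ∀ ρ : (H →L[ℂ] H) → (H →L[ℂ] H), IsVNEndo M₀ ρ →
          (∀ n ∈ relComm M₀ (P : Set (H →L[ℂ] H)), ρ n = n) → ρ a = a} := by
  ext a
  constructor
  · intro ha
    exact ⟨ha.2, fun ρ _ hfix => hfix a ha⟩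
  · rintro ⟨haM, hfix⟩
    refine ⟨P.toStarSubalgebra.mem_centralizer_of_forall_unitary_commute fun u hu huP => ?_, haM⟩
    have hconj_fixes_relComm (n) (hn : n ∈ relComm M₀ P) : u * n * star u = n :=
      (commute_unitary_iff_star_right_conjugate hu).1 (hn.1 u huP)
    exact (commute_unitary_iff_star_right_conjugate hu).2
      (hfix _ (isVNEndo_conj_unitary M₀ hu (hP huP)) hconj_fixes_relComm)
end

section
/- Let M₀ be a von Neumann algebra on a complex Hilbert space H and N a von Neumann subalgebra with relative commutant N^c := N' ∩ M₀ satisfying biduality (N^c)' ∩ M₀ = N. Let ρ and σ be unital *-endomorphisms of M₀ such that ρ(n) = n for all n ∈ N and σ(m) = m for all m ∈ N^c. Then ρ(σ(a)) = σ(ρ(a)) for every a in the unital *-subalgebra of M₀ generated by N ∪ N^c. (Algebraic core of one inclusion in the proposition '(C_N)^c = C_{N^c}': endomorphisms dual to N and to N^c commute.) -/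
/-!
An endomorphism fixing a set `T ⊆ M₀` pointwise preserves its relative commutant. So `σ`
preserves `(N^c)^c = N` and `ρ` preserves `N^c`; on a generator from `N` both `ρσ` and `σρ`
reduce to `σ`, on one from `N^c` both reduce to `ρ`. The agreement set of two unital
*-endomorphisms is a *-subalgebra, so it contains everything the generators generate.
-/

variable {H : Type*} [NormedAddCommGroup H] [InnerProductSpace ℂ H] [CompleteSpace H]

namespace IsVNEndo

variable {M₀ : VonNeumannAlgebra H} {ρ σ : (H →L[ℂ] H) → (H →L[ℂ] H)}

theorem comp (hρ : IsVNEndo M₀ ρ) (hσ : IsVNEndo M₀ σ) : IsVNEndo M₀ (ρ ∘ σ) where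
  maps_to a ha := hρ.maps_to _ (hσ.maps_to a ha)
  map_add a ha b hb := by
    simp only [Function.comp_apply, hσ.map_add a ha b hb,
      hρ.map_add _ (hσ.maps_to a ha) _ (hσ.maps_to b hb)]
  map_smul c a ha := by
    simp only [Function.comp_apply, hσ.map_smul c a ha, hρ.map_smul c _ (hσ.maps_to a ha)]
  map_mul a ha b hb := by
    simp only [Function.comp_apply, hσ.map_mul a ha b hb,
      hρ.map_mul _ (hσ.maps_to a ha) _ (hσ.maps_to b hb)]
  map_star a ha := by
    simp only [Function.comp_apply, hσ.map_star a ha, hρ.map_star _ (hσ.maps_to a ha)]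
  map_one := by simp only [Function.comp_apply, hσ.map_one, hρ.map_one]

theorem map_algebraMap (hρ : IsVNEndo M₀ ρ) (c : ℂ) :
    ρ (algebraMap ℂ (H →L[ℂ] H) c) = algebraMap ℂ (H →L[ℂ] H) c := by
  rw [Algebra.algebraMap_eq_smul_one, hρ.map_smul c 1 M₀.one_mem, hρ.map_one]

def eqLocus (hρ : IsVNEndo M₀ ρ) (hσ : IsVNEndo M₀ σ) : StarSubalgebra ℂ (H →L[ℂ] H) where
  carrier := {a | a ∈ M₀ ∧ ρ a = σ a}
  mul_mem' := by
    rintro a b ⟨ha, hab⟩ ⟨hb, hbb⟩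
    exact ⟨mul_mem ha hb, by rw [hρ.map_mul a ha b hb, hσ.map_mul a ha b hb, hab, hbb]⟩
  add_mem' := by
    rintro a b ⟨ha, hab⟩ ⟨hb, hbb⟩
    exact ⟨add_mem ha hb, by rw [hρ.map_add a ha b hb, hσ.map_add a ha b hb, hab, hbb]⟩
  algebraMap_mem' c :=
    ⟨M₀.algebraMap_mem c, by rw [hρ.map_algebraMap, hσ.map_algebraMap]⟩
  star_mem' := by
    rintro a ⟨ha, hab⟩
    exact ⟨star_mem ha, by rw [hρ.map_star a ha, hσ.map_star a ha, hab]⟩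

theorem mapsTo_relComm (hρ : IsVNEndo M₀ ρ) {T : Set (H →L[ℂ] H)}
    (hT : T ⊆ (M₀ : Set (H →L[ℂ] H))) (hfix : ∀ t ∈ T, ρ t = t) :
    Set.MapsTo ρ (relComm M₀ T) (relComm M₀ T) := by
  rintro m ⟨hmT, hm⟩
  refine ⟨fun t ht => ?_, hρ.maps_to m hm⟩
  calc t * ρ m = ρ (t * m) := by rw [hρ.map_mul t (hT ht) m hm, hfix t ht]
    _ = ρ (m * t) := by rw [hmT t ht]
    _ = ρ m * t := by rw [hρ.map_mul m hm t (hT ht), hfix t ht]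

end IsVNEndo

/-- If `N ⊆ M₀` satisfies biduality `(N^c)^c = N`, `ρ` fixes `N` pointwise and
`σ` fixes `N^c` pointwise, then `ρ` and `σ` commute on the unital *-subalgebra of `M₀`
generated by `N ∪ N^c`. -/
theorem endos_dual_to_complements_commute
    (M₀ N : VonNeumannAlgebra H) (hN : (N : Set (H →L[ℂ] H)) ⊆ (M₀ : Set (H →L[ℂ] H)))
    (hbi : relComm M₀ (relComm M₀ (N : Set (H →L[ℂ] H))) = (N : Set (H →L[ℂ] H)))
    (ρ σ : (H →L[ℂ] H) → (H →L[ℂ] H)) (hρ : IsVNEndo M₀ ρ) (hσ : IsVNEndo M₀ σ)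
    (hρfix : ∀ n ∈ N, ρ n = n)
    (hσfix : ∀ m ∈ relComm M₀ (N : Set (H →L[ℂ] H)), σ m = m) :
    ∀ a ∈ StarAlgebra.adjoin ℂ ((N : Set (H →L[ℂ] H)) ∪ relComm M₀ (N : Set (H →L[ℂ] H))),
      ρ (σ a) = σ (ρ a) := by
  intro a ha
  have hσN : Set.MapsTo σ N N := by
    simpa only [hbi] using hσ.mapsTo_relComm (fun m hm => hm.2) hσfix
  have hρNc := hρ.mapsTo_relComm hN hρfix
  have hgen : (N : Set (H →L[ℂ] H)) ∪ relComm M₀ N ⊆ (hρ.comp hσ).eqLocus (hσ.comp hρ) := by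
    rintro x (hx | hx)
    · exact ⟨hN hx, by simp only [Function.comp_apply, hρfix _ (hσN hx), hρfix x hx]⟩
    · exact ⟨hx.2, by simp only [Function.comp_apply, hσfix _ (hρNc hx), hσfix x hx]⟩
  exact (StarAlgebra.adjoin_le hgen ha).2
end

section
/- Let M₀ be a von Neumann algebra on a complex Hilbert space H and N a von Neumann subalgebra with relative commutant N^c := N' ∩ M₀. Let s₁, …, s_k ∈ N satisfy s_a* s_b = δ_{ab}·1 and Σ_a s_a s_a* = 1, and let t₁, …, t_l ∈ N^c satisfy t_b* t_c = δ_{bc}·1 and Σ_b t_b t_b* = 1. Let ρ₁, …, ρ_k be unital *-endomorphisms of M₀ fixing N^c pointwise and σ₁, …, σ_l unital *-endomorphisms of M₀ fixing N pointwise, and define ρ(x) := Σ_a s_a ρ_a(x) s_a* and σ(x) := Σ_b t_b σ_b(x) t_b*. Then Σ_{a,b} σ(s_a) t_b s_a* ρ(t_b*) = 1. (Reducible case of the proposition that braiding triviality between the dual categories C_N and C_{N^c} reduces to finitely many equations: if all braiding operators of the irreducible summands are trivial, the braiding of the direct sums is trivial.) -/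
/-! Since the `σ_b` fix `s_a ∈ N` and the `ρ_a` fix `t_b* ∈ N^c`, the direct sums act on these
operators by conjugation: `σ(s_a) = Σ_c t_c s_a t_c*` and `ρ(t_b*) = Σ_c s_c t_b* s_c*`. The
Cuntz relations then collapse each summand to `t_b t_b* s_a s_a*` (using that `s_a` and `t_b*`
commute), and summing over `a` and `b` gives `1`. -/

variable {H : Type*} [NormedAddCommGroup H] [InnerProductSpace ℂ H] [CompleteSpace H]

open Finset

section OrthogonalIsometries

variable {R ι : Type*} [Semiring R] [Star R] [Fintype ι] [DecidableEq ι]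
  {v : ι → R} (hv : ∀ a b, star (v a) * v b = if a = b then 1 else 0) (x : ι → R)
include hv

theorem sum_conj_mul_of_orthogonal_isometries (b : ι) :
    (∑ c, v c * x c * star (v c)) * v b = v b * x b := by
  simp only [sum_mul, mul_assoc, hv, mul_ite, mul_one, mul_zero, sum_ite_eq', mem_univ,
    if_true]

theorem star_mul_sum_conj_of_orthogonal_isometries (a : ι) :
    star (v a) * (∑ c, v c * x c * star (v c)) = x a * star (v a) := by
  simp only [mul_sum, ← mul_assoc, hv, ite_mul, one_mul, zero_mul, sum_ite_eq, mem_univ,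
    if_true]

end OrthogonalIsometries

theorem sum_braiding_eq_one_of_commute {R ι κ : Type*} [Semiring R] [Star R]
    [Fintype ι] [DecidableEq ι] [Fintype κ] [DecidableEq κ] {s : ι → R} {t : κ → R}
    (hsorth : ∀ a b, star (s a) * s b = if a = b then 1 else 0)
    (hssum : ∑ a, s a * star (s a) = 1)
    (htorth : ∀ a b, star (t a) * t b = if a = b then 1 else 0)
    (htsum : ∑ b, t b * star (t b) = 1)
    (hcomm : ∀ a b, s a * star (t b) = star (t b) * s a) :
    ∑ a, ∑ b, (∑ c, t c * s a * star (t c)) * t b * star (s a) *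
      (∑ c, s c * star (t b) * star (s c)) = 1 := by
  have hterm : ∀ a b, (∑ c, t c * s a * star (t c)) * t b * star (s a) *
      (∑ c, s c * star (t b) * star (s c)) = t b * star (t b) * (s a * star (s a)) := by
    intro a b
    calc _ = ((∑ c, t c * s a * star (t c)) * t b) *
          (star (s a) * (∑ c, s c * star (t b) * star (s c))) := by simp only [mul_assoc]
      _ = t b * (s a * star (t b)) * star (s a) := by
          rw [sum_conj_mul_of_orthogonal_isometries htorth (fun _ ↦ s a),
            star_mul_sum_conj_of_orthogonal_isometries hsorth (fun _ ↦ star (t b))]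
          simp only [mul_assoc]
      _ = t b * star (t b) * (s a * star (s a)) := by rw [hcomm]; simp only [mul_assoc]
  simp only [hterm, ← sum_mul, htsum, one_mul, hssum]

theorem star_mem_relComm {M₀ N : VonNeumannAlgebra H} {x : H →L[ℂ] H}
    (hx : x ∈ relComm M₀ (N : Set (H →L[ℂ] H))) : star x ∈ relComm M₀ (N : Set (H →L[ℂ] H)) :=
  ⟨Set.star_mem_centralizer' (fun _ ↦ star_mem) hx.1, star_mem hx.2⟩

theorem direct_sum_braiding_trivial_general
    (M₀ N : VonNeumannAlgebra H)
    (k l : ℕ)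
    (s : Fin k → (H →L[ℂ] H)) (hs : ∀ a, s a ∈ N)
    (t : Fin l → (H →L[ℂ] H)) (ht : ∀ b, t b ∈ relComm M₀ (N : Set (H →L[ℂ] H)))
    (hsorth : ∀ a b, star (s a) * s b = if a = b then (1 : H →L[ℂ] H) else 0)
    (hssum : ∑ a, s a * star (s a) = 1)
    (htorth : ∀ a b, star (t a) * t b = if a = b then (1 : H →L[ℂ] H) else 0)
    (htsum : ∑ b, t b * star (t b) = 1)
    (ρs : Fin k → ((H →L[ℂ] H) → (H →L[ℂ] H)))
    (hρfix : ∀ a, ∀ m ∈ relComm M₀ (N : Set (H →L[ℂ] H)), ρs a m = m)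
    (σs : Fin l → ((H →L[ℂ] H) → (H →L[ℂ] H)))
    (hσfix : ∀ b, ∀ n ∈ N, σs b n = n) :
    ∑ a, ∑ b, (∑ c, t c * σs c (s a) * star (t c)) * t b * star (s a) *
      (∑ c, s c * ρs c (star (t b)) * star (s c)) = 1 := by
  have hσ_s : ∀ c a, σs c (s a) = s a := fun c a ↦ hσfix c _ (hs a)
  have hρ_t : ∀ c b, ρs c (star (t b)) = star (t b) :=
    fun c b ↦ hρfix c _ (star_mem_relComm (ht b))
  have hcomm : ∀ a b, s a * star (t b) = star (t b) * s a :=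
    fun a b ↦ (star_mem_relComm (ht b)).1 (s a) (hs a)
  simp only [hσ_s, hρ_t]
  exact sum_braiding_eq_one_of_commute hsorth hssum htorth htsum hcomm

/-- (Reducible case of braiding triviality reducing to finitely many
equations.) For Cuntz families `s a ∈ N`, `t b ∈ N^c` and direct sums
`ρ(x) = Σ_a s_a ρ_a(x) s_a*`, `σ(x) = Σ_b t_b σ_b(x) t_b*` of endomorphisms fixing `N^c`
resp. `N` pointwise, the braiding operator `Σ_{a,b} σ(s_a) t_b s_a* ρ(t_b*)` is trivial. -/
theorem direct_sum_braiding_trivial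
    (M₀ N : VonNeumannAlgebra H) (hN : (N : Set (H →L[ℂ] H)) ⊆ (M₀ : Set (H →L[ℂ] H)))
    (k l : ℕ)
    (s : Fin k → (H →L[ℂ] H)) (hs : ∀ a, s a ∈ N)
    (t : Fin l → (H →L[ℂ] H)) (ht : ∀ b, t b ∈ relComm M₀ (N : Set (H →L[ℂ] H)))
    (hsorth : ∀ a b, star (s a) * s b = if a = b then (1 : H →L[ℂ] H) else 0)
    (hssum : ∑ a, s a * star (s a) = 1)
    (htorth : ∀ a b, star (t a) * t b = if a = b then (1 : H →L[ℂ] H) else 0)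
    (htsum : ∑ b, t b * star (t b) = 1)
    (ρs : Fin k → ((H →L[ℂ] H) → (H →L[ℂ] H))) (hρs : ∀ a, IsVNEndo M₀ (ρs a))
    (hρfix : ∀ a, ∀ m ∈ relComm M₀ (N : Set (H →L[ℂ] H)), ρs a m = m)
    (σs : Fin l → ((H →L[ℂ] H) → (H →L[ℂ] H))) (hσs : ∀ b, IsVNEndo M₀ (σs b))
    (hσfix : ∀ b, ∀ n ∈ N, σs b n = n) :
    ∑ a, ∑ b, (∑ c, t c * σs c (s a) * star (t c)) * t b * star (s a) *
      (∑ c, s c * ρs c (star (t b)) * star (s c)) = 1 :=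
  direct_sum_braiding_trivial_general M₀ N k l s hs t ht hsorth hssum htorth htsum ρs hρfix σs hσfix
end
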